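/- Let $u, v : \mathbb{R} \to [0,\infty)$ be measurable with $\int_{-\infty}^0 u, \int_{-\infty}^0 v < \infty$, and suppose for some $\ell \geq 0$ that $\int_{-\infty}^r v(x)\,dx \leq \int_{-\infty}^r u(x)\,dx + \ell$ for all $r \in \mathbb{R}$. Then for any $\delta > 0$, the heat semigroup preserves this relation: $\int_{-\infty}^r \mathcal{S}_\delta v(x)\,dx \leq \int_{-\infty}^r \mathcal{S}_\delta u(x)\,dx + \ell$ for all $r \in \mathbb{R}$, where $\mathcal{S}_\delta f(x) = \int_{\mathbb{R}} \mathfrak{p}_\delta(y-x) f(y)\,dy$ and $\mathfrak{p}_\delta$ is the Gaussian density with mean $0$ and variance $\delta$. -/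

import Mathlib

open MeasureTheory Set Real
open scoped ENNReal NNReal

/-- The Gaussian heat kernel with variance `t`. -/
noncomputable def heatKernel (t z : ℝ) : ℝ :=
  (Real.sqrt (2 * Real.pi * t))⁻¹ * Real.exp (-z ^ 2 / (2 * t))

/-- Cumulative integral `∫_{-∞}^a v`. -/
noncomputable def cum (v : ℝ → ℝ≥0∞) (a : ℝ) : ℝ≥0∞ :=
  ∫⁻ x in Set.Iic a, v x

/-- Heat semigroup applied to a nonnegative function. -/
noncomputable def heatSemigroup (δ : ℝ) (f : ℝ → ℝ) (x : ℝ) : ℝ≥0∞ :=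
  ∫⁻ y, ENNReal.ofReal (heatKernel δ (y - x)) * ENNReal.ofReal (f y)

/-! The semigroup averages the cumulative integrals: `∫_{-∞}^r S_δ f = ∫ p_δ(z) ∫_{-∞}^{r+z} f dz`
(translation invariance and Tonelli). Since `p_δ` is a probability density, averaging the
pointwise inequality `∫_{-∞}^{r+z} v ≤ ∫_{-∞}^{r+z} u + ℓ` against it gives the claim. -/

lemma lintegral_mul_le_lintegral_mul_add {α : Type*} [MeasurableSpace α] {μ : Measure α}
    {k F G : α → ℝ≥0∞} (hk : AEMeasurable k μ) (hk_one : ∫⁻ a, k a ∂μ = 1) {c : ℝ≥0∞}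
    (hFG : ∀ a, F a ≤ G a + c) :
    ∫⁻ a, k a * F a ∂μ ≤ ∫⁻ a, k a * G a ∂μ + c :=
  calc ∫⁻ a, k a * F a ∂μ ≤ ∫⁻ a, (k a * G a + k a * c) ∂μ :=
        lintegral_mono fun a => by rw [← mul_add]; exact mul_le_mul_right (hFG a) _
    _ = ∫⁻ a, k a * G a ∂μ + c := by
        rw [lintegral_add_right' _ (hk.mul_const c), lintegral_mul_const'' c hk, hk_one, one_mul]

lemma heatKernel_eq_gaussianPDFReal {δ : ℝ} (hδ : 0 < δ) (z : ℝ) :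
    heatKernel δ z = ProbabilityTheory.gaussianPDFReal 0 δ.toNNReal z := by
  simp [heatKernel, ProbabilityTheory.gaussianPDFReal, Real.coe_toNNReal _ hδ.le]

lemma lintegral_heatKernel {δ : ℝ} (hδ : 0 < δ) :
    ∫⁻ z, ENNReal.ofReal (heatKernel δ z) = 1 := by
  simp_rw [heatKernel_eq_gaussianPDFReal hδ]
  exact ProbabilityTheory.lintegral_gaussianPDFReal_eq_one 0 (by simpa using hδ)

lemma measurable_heatKernel (δ : ℝ) : Measurable (heatKernel δ) :=
  ((((measurable_id.pow_const 2).neg).div_const _).exp).const_mul _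

lemma heatSemigroup_eq_lintegral_comp_add (δ : ℝ) (f : ℝ → ℝ) (x : ℝ) :
    heatSemigroup δ f x = ∫⁻ z, ENNReal.ofReal (heatKernel δ z) * ENNReal.ofReal (f (x + z)) := by
  rw [heatSemigroup, ← lintegral_add_right_eq_self _ x]
  simp [add_comm]

lemma cum_comp_add_right (f : ℝ → ℝ≥0∞) (r z : ℝ) :
    cum (fun x => f (x + z)) r = cum f (r + z) := by
  have hpre : (fun x : ℝ => x + z) ⁻¹' Iic (r + z) = Iic r := by
    ext x; simp
  rw [cum, cum, ← hpre]
  exact (measurePreserving_add_right volume z).setLIntegral_comp_preimage_emb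
    (MeasurableEquiv.addRight z).measurableEmbedding f (Iic (r + z))

lemma cum_heatSemigroup (δ : ℝ) {f : ℝ → ℝ} (hf : Measurable f) (r : ℝ) :
    cum (heatSemigroup δ f) r
      = ∫⁻ z, ENNReal.ofReal (heatKernel δ z) * cum (fun x => ENNReal.ofReal (f x)) (r + z) := by
  have hmeas : Measurable fun p : ℝ × ℝ =>
      ENNReal.ofReal (heatKernel δ p.2) * ENNReal.ofReal (f (p.1 + p.2)) :=
    ((measurable_heatKernel δ).comp measurable_snd).ennreal_ofReal.mul
      (hf.comp (measurable_fst.add measurable_snd)).ennreal_ofReal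
  simp_rw [cum, heatSemigroup_eq_lintegral_comp_add]
  rw [lintegral_lintegral_swap hmeas.aemeasurable]
  refine lintegral_congr fun z => ?_
  rw [lintegral_const_mul _ (by fun_prop)]
  exact congrArg _ (cum_comp_add_right (fun x => ENNReal.ofReal (f x)) r z)

theorem stmt_1_general (u v : ℝ → ℝ) (hu_meas : Measurable u) (hv_meas : Measurable v)
    (ℓ : ℝ)
    (hle : ∀ r : ℝ, cum (fun x => ENNReal.ofReal (v x)) r
      ≤ cum (fun x => ENNReal.ofReal (u x)) r + ENNReal.ofReal ℓ)
    (δ : ℝ) (hδ : 0 < δ) :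
    ∀ r : ℝ, cum (heatSemigroup δ v) r ≤ cum (heatSemigroup δ u) r + ENNReal.ofReal ℓ := by
  intro r
  rw [cum_heatSemigroup δ hv_meas, cum_heatSemigroup δ hu_meas]
  exact lintegral_mul_le_lintegral_mul_add (measurable_heatKernel δ).ennreal_ofReal.aemeasurable
    (lintegral_heatKernel hδ) fun z => hle (r + z)

/-- The heat semigroup preserves the ordering `u ≼ v mod ℓ` of cumulative
integrals: if `∫_{-∞}^r v ≤ ∫_{-∞}^r u + ℓ` for all `r`, the same holds after
applying `S_δ`. -/
theorem stmt_1 (u v : ℝ → ℝ) (hu_meas : Measurable u) (hv_meas : Measurable v)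
    (hu_nonneg : ∀ x, 0 ≤ u x) (hv_nonneg : ∀ x, 0 ≤ v x)
    (hu_left : cum (fun x => ENNReal.ofReal (u x)) 0 < ⊤)
    (hv_left : cum (fun x => ENNReal.ofReal (v x)) 0 < ⊤)
    (ℓ : ℝ) (hℓ : 0 ≤ ℓ)
    (hle : ∀ r : ℝ, cum (fun x => ENNReal.ofReal (v x)) r
      ≤ cum (fun x => ENNReal.ofReal (u x)) r + ENNReal.ofReal ℓ)
    (δ : ℝ) (hδ : 0 < δ) :
    ∀ r : ℝ, cum (heatSemigroup δ v) r ≤ cum (heatSemigroup δ u) r + ENNReal.ofReal ℓ :=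
  stmt_1_general u v hu_meas hv_meas ℓ hle δ hδ
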